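/- arXiv:2201.10942 — 3 statements merged into one kernel-verified Lean document; each statement's English description precedes it below -/
import Mathlib

section
/- Let ℓ ⊂ ℝⁿ be a line through the origin and let Y₁^ℓ = {Λ ∈ X_n : Λ ∩ ℓ is a unimodular (covolume-1) lattice in ℓ}. Then Y₁^ℓ is the orbit of the closed subgroup G(ℓ) = {g ∈ SL_n(ℝ) : g v = v for all v ∈ ℓ}, and Y₁^ℓ is closed in X_n. -/
/-!
Let `u` be a unit vector spanning `ℓ`. The lattice `g ℤⁿ` meets `ℓ` in a unimodular lattice
exactly when `u` is a primitive vector of `g ℤⁿ`, i.e. `g⁻¹ u` is a primitive integer vector.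
So `Y₁^ℓ` is the image of the right `SL_n(ℤ)`-invariant set `S` of such `g`, and `S` is the
preimage of the closed discrete set of primitive integer vectors under `g ↦ g⁻¹ u`, hence
closed. Left multiplication by `G(ℓ)` preserves `S`, and `G(ℓ)` is transitive on `Y₁^ℓ` because
`SL_n(ℤ)` is transitive on primitive vectors: a primitive vector extends to a basis of `ℤⁿ`,
and rescaling another basis vector by the determinant `±1` lands in `SL_n(ℤ)`.
-/

open Matrix

noncomputable instance stmt6.instTop (n : ℕ) :
    TopologicalSpace (SpecialLinearGroup (Fin n) ℝ) :=
  TopologicalSpace.induced (fun g => (g : Matrix (Fin n) (Fin n) ℝ)) inferInstance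

namespace UnimodularLattices

section Primitive

variable {ι : Type*} [Fintype ι]

/-- The Bézout form of primitivity: equivalently, the entries of `w` have gcd `1`. -/
def IsPrimitive (w : ι → ℤ) : Prop := ∃ u : ι → ℤ, u ⬝ᵥ w = 1

lemma IsPrimitive.neg {w : ι → ℤ} (hw : IsPrimitive w) : IsPrimitive (-w) := by
  obtain ⟨u, hu⟩ := hw
  exact ⟨-u, by rw [neg_dotProduct, dotProduct_neg, neg_neg, hu]⟩

lemma IsPrimitive.smul [DecidableEq ι] {w : ι → ℤ} (hw : IsPrimitive w)
    (γ : SpecialLinearGroup ι ℤ) : IsPrimitive (γ • w) := by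
  obtain ⟨u, hu⟩ := hw
  refine ⟨u ᵥ* (γ⁻¹ : SpecialLinearGroup ι ℤ), ?_⟩
  rw [← inv_smul_smul γ w] at hu
  exact (dotProduct_mulVec _ _ _).symm.trans hu

lemma IsPrimitive.exists_eq_zsmul {w w' : ι → ℤ} (hw : IsPrimitive w) {c : ℝ}
    (h : (fun j => (w' j : ℝ)) = c • fun j => (w j : ℝ)) : ∃ k : ℤ, w' = k • w := by
  obtain ⟨u, hu⟩ := hw
  have hcast (v : ι → ℤ) :
      ((u ⬝ᵥ v : ℤ) : ℝ) = (fun j => (u j : ℝ)) ⬝ᵥ fun j => (v j : ℝ) := by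
    simp [dotProduct]
  have hc : ((u ⬝ᵥ w' : ℤ) : ℝ) = c := by
    rw [hcast, h, dotProduct_smul, ← hcast, hu, Int.cast_one, smul_eq_mul, mul_one]
  refine ⟨u ⬝ᵥ w', funext fun j => Int.cast_injective (α := ℝ) ?_⟩
  have := congrFun h j
  simp only [Pi.smul_apply, smul_eq_mul, Int.cast_mul] at this ⊢
  rw [this, hc]

lemma isPrimitive_of_forall_mem_exists_eq_zsmul {L : Submodule ℝ (ι → ℝ)} {w : ι → ℤ}
    (hw₀ : w ≠ 0) (hwL : (fun j => (w j : ℝ)) ∈ L)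
    (hL : ∀ w' : ι → ℤ, (fun j => (w' j : ℝ)) ∈ L → ∃ k : ℤ, w' = k • w) :
    IsPrimitive w := by
  -- `d` generates the ideal of the entries; `w / d` lies in `L`, so `w / d = k w` and `d k = 1`
  obtain ⟨d, hd⟩ := (IsPrincipalIdealRing.principal (Ideal.span (Set.range w))).principal
  rw [Ideal.submodule_span_eq] at hd
  have hdvd (i : ι) : d ∣ w i :=
    Ideal.mem_span_singleton.mp (hd ▸ Ideal.subset_span ⟨i, rfl⟩)
  choose q hq using hdvd
  have hwq : w = d • q := funext hq
  have hd₀ : (d : ℝ) ≠ 0 := by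
    rintro hd₀
    exact hw₀ (by rw [hwq, Int.cast_eq_zero.mp hd₀, zero_smul])
  obtain ⟨k, hk⟩ := hL q (by
    convert L.smul_mem (d : ℝ)⁻¹ hwL using 1
    ext i
    simp [hq, hd₀])
  have hdk : d * k = 1 := by
    obtain ⟨i, hi⟩ := Function.ne_iff.mp hw₀
    have : w i = d * k * w i := by
      conv_lhs => rw [hwq, hk]
      simp [mul_assoc]
    exact mul_right_cancel₀ hi (by rwa [one_mul, eq_comm])
  have h1 : (1 : ℤ) ∈ Ideal.span (Set.range w) := by
    rw [hd, Ideal.span_singleton_eq_top.mpr (IsUnit.of_mul_eq_one k hdk)]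
    trivial
  obtain ⟨u, hu⟩ := Ideal.mem_span_range_iff_exists_fun.mp h1
  exact ⟨u, hu⟩

end Primitive

section Transitivity

variable {m : ℕ}

lemma IsPrimitive.exists_basis_zero_eq {w : Fin (m + 1) → ℤ} (hw : IsPrimitive w) :
    ∃ b : Module.Basis (Fin (m + 1)) ℤ (Fin (m + 1) → ℤ), b 0 = w := by
  obtain ⟨u, hu⟩ := hw
  -- `ℤ^(m+1) = ℤ w ⊕ ker f`, where `f = u ⬝ᵥ ·` satisfies `f w = 1`
  let f := dotProductEquiv ℤ (Fin (m + 1)) u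
  have hf (v) : f v = u ⬝ᵥ v := rfl
  obtain ⟨k, bK⟩ := Submodule.basisOfPid (Pi.basisFun ℤ _) (LinearMap.ker f)
  have hli (c : ℤ) (x) (hx : x ∈ LinearMap.ker f) (h : c • w + x = 0) : c = 0 := by
    have := congrArg f h
    rwa [map_add, map_smul, LinearMap.mem_ker.mp hx, hf w, hu, smul_eq_mul, mul_one, add_zero,
      map_zero] at this
  have hsp (z : Fin (m + 1) → ℤ) : ∃ c : ℤ, z + c • w ∈ LinearMap.ker f :=
    ⟨-f z, by rw [LinearMap.mem_ker, map_add, map_smul, hf w, hu, smul_eq_mul, mul_one,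
      add_neg_cancel]⟩
  let b := Module.Basis.mkFinCons w bK hli hsp
  obtain rfl : k = m := by
    simpa using (Module.finrank_eq_card_basis b).symm.trans
      (Module.finrank_eq_card_basis (Pi.basisFun ℤ (Fin (m + 1))))
  exact ⟨b, by simp [b]⟩

lemma IsPrimitive.exists_smul_single_zero_eq (hm : m ≠ 0) {w : Fin (m + 1) → ℤ}
    (hw : IsPrimitive w) : ∃ γ : SpecialLinearGroup (Fin (m + 1)) ℤ, γ • Pi.single 0 1 = w := by
  obtain ⟨b, hb⟩ := hw.exists_basis_zero_eq
  set M := (Pi.basisFun ℤ (Fin (m + 1))).toMatrix b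
  have hM : M *ᵥ Pi.single 0 1 = w := by
    ext i
    simp [M, Module.Basis.toMatrix_apply, hb]
  have hdet : IsUnit M.det := by
    rw [← Module.Basis.det_apply]
    exact (Pi.basisFun ℤ (Fin (m + 1))).isUnit_det b
  have hlast : Fin.last m ≠ 0 := by simp [Fin.ext_iff, hm]
  -- rescaling the last column by `det M = ±1` fixes the first column and makes the determinant `1`
  let D := diagonal (Pi.mulSingle (Fin.last m) M.det)
  refine ⟨⟨M * D, ?_⟩, ?_⟩
  · rw [det_mul, det_diagonal, Finset.prod_pi_mulSingle', if_pos (Finset.mem_univ _)]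
    exact Int.isUnit_mul_self hdet
  · change (M * D) *ᵥ _ = w
    rw [← mulVec_mulVec, diagonal_mulVec_single, Pi.mulSingle_eq_of_ne hlast.symm, one_mul, hM]

lemma IsPrimitive.exists_smul_eq {n : ℕ} (hn : 1 < n) {w₁ w₂ : Fin n → ℤ}
    (h₁ : IsPrimitive w₁) (h₂ : IsPrimitive w₂) :
    ∃ γ : SpecialLinearGroup (Fin n) ℤ, γ • w₁ = w₂ := by
  obtain ⟨m, rfl⟩ : ∃ m, n = m + 1 := ⟨n - 1, by omega⟩
  obtain ⟨γ₁, hγ₁⟩ := h₁.exists_smul_single_zero_eq (by omega)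
  obtain ⟨γ₂, hγ₂⟩ := h₂.exists_smul_single_zero_eq (by omega)
  exact ⟨γ₂ * γ₁⁻¹, by rw [mul_smul, ← hγ₁, inv_smul_smul, hγ₂]⟩

end Transitivity

section UnitVector

variable {ι : Type*} [Fintype ι]

lemma exists_dotProduct_self_eq_one_span_eq {v : ι → ℝ} (hv : v ≠ 0) :
    ∃ u : ι → ℝ, u ⬝ᵥ u = 1 ∧ Submodule.span ℝ {v} = Submodule.span ℝ {u} := by
  have hpos : 0 < v ⬝ᵥ v := by simpa using dotProduct_self_star_pos_iff.mpr hv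
  obtain ⟨r, hr, hrr⟩ : ∃ r : ℝ, 0 < r ∧ r * r = v ⬝ᵥ v :=
    ⟨√(v ⬝ᵥ v), Real.sqrt_pos.mpr hpos, Real.mul_self_sqrt hpos.le⟩
  refine ⟨r⁻¹ • v, ?_, (Submodule.span_singleton_smul_eq (inv_pos.mpr hr).ne'.isUnit v).symm⟩
  rw [smul_dotProduct, dotProduct_smul, smul_eq_mul, smul_eq_mul, ← hrr]
  field_simp

lemma eq_or_eq_neg_of_mem_span_singleton {u x : ι → ℝ} (hu : u ⬝ᵥ u = 1)
    (hx : x ∈ Submodule.span ℝ {u}) (hxx : x ⬝ᵥ x = 1) : x = u ∨ x = -u := by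
  obtain ⟨a, rfl⟩ := Submodule.mem_span_singleton.mp hx
  rw [smul_dotProduct, dotProduct_smul, hu, smul_eq_mul, smul_eq_mul, mul_one,
    mul_self_eq_one_iff] at hxx
  rcases hxx with rfl | rfl
  · exact Or.inl (one_smul ℝ u)
  · exact Or.inr (neg_one_smul ℝ u)

end UnitVector

section Lattice

variable {ι : Type*} [Fintype ι] [DecidableEq ι]

/-- `u` is a primitive vector of the lattice `g ℤ^ι`. -/
def IsPrimitiveVector (g : SpecialLinearGroup ι ℝ) (u : ι → ℝ) : Prop :=
  ∃ w : ι → ℤ, IsPrimitive w ∧ g • (fun j => (w j : ℝ)) = u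

lemma map_intCast_smul (γ : SpecialLinearGroup ι ℤ) (w : ι → ℤ) :
    SpecialLinearGroup.map (Int.castRingHom ℝ) γ • (fun j => (w j : ℝ)) =
      fun j => ((γ • w) j : ℝ) := by
  ext i
  exact (RingHom.map_mulVec (Int.castRingHom ℝ) (γ : Matrix ι ι ℤ) w i).symm

variable {g : SpecialLinearGroup ι ℝ} {u : ι → ℝ}

lemma IsPrimitiveVector.mul_map_intCast (h : IsPrimitiveVector g u)
    (γ : SpecialLinearGroup ι ℤ) :
    IsPrimitiveVector (g * SpecialLinearGroup.map (Int.castRingHom ℝ) γ) u := by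
  obtain ⟨w, hw, rfl⟩ := h
  exact ⟨γ⁻¹ • w, hw.smul _, by rw [mul_smul, map_intCast_smul, smul_inv_smul]⟩

lemma IsPrimitiveVector.mul_left (h : IsPrimitiveVector g u) {g' : SpecialLinearGroup ι ℝ}
    (hg' : g' • u = u) : IsPrimitiveVector (g' * g) u := by
  obtain ⟨w, hw, rfl⟩ := h
  exact ⟨w, hw, by rw [mul_smul, hg']⟩

theorem isPrimitiveVector_iff (hu : u ⬝ᵥ u = 1) :
    IsPrimitiveVector g u ↔ ∃ w : ι → ℤ,
      g • (fun j => (w j : ℝ)) ∈ Submodule.span ℝ {u} ∧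
      (g • fun j => (w j : ℝ)) ⬝ᵥ (g • fun j => (w j : ℝ)) = 1 ∧
      ∀ w' : ι → ℤ, g • (fun j => (w' j : ℝ)) ∈ Submodule.span ℝ {u} →
        ∃ k : ℤ, w' = k • w := by
  constructor
  · rintro ⟨w, hw, rfl⟩
    refine ⟨w, Submodule.mem_span_singleton_self _, hu, fun w' hw' => ?_⟩
    obtain ⟨c, hc⟩ := Submodule.mem_span_singleton.mp hw'
    exact hw.exists_eq_zsmul (smul_left_cancel g (by rw [smul_comm, hc]))
  · rintro ⟨w, hwu, hww, hmax⟩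
    have hw₀ : w ≠ 0 := by
      rintro rfl
      simp [← Pi.zero_def] at hww
    have hw : IsPrimitive w :=
      isPrimitive_of_forall_mem_exists_eq_zsmul
        (L := (Submodule.span ℝ {u}).comap (DistribSMul.toLinearMap ℝ (ι → ℝ) g))
        hw₀ hwu hmax
    rcases eq_or_eq_neg_of_mem_span_singleton hu hwu hww with h | h
    · exact ⟨w, hw, h⟩
    · refine ⟨-w, hw.neg, ?_⟩
      simp only [Pi.neg_apply, Int.cast_neg]
      rw [← Pi.neg_def, smul_neg, h, neg_neg]

end Lattice

section Topology

variable {n : ℕ}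

lemma isClosed_setOf_isPrimitiveVector (u : Fin n → ℝ) :
    IsClosed {g : SpecialLinearGroup (Fin n) ℝ | IsPrimitiveVector g u} := by
  have hS : {g : SpecialLinearGroup (Fin n) ℝ | IsPrimitiveVector g u} =
      (fun g => g⁻¹ • u) ⁻¹' ((fun w j => (w j : ℝ)) '' {w | IsPrimitive w}) := by
    ext g
    simp only [Set.mem_preimage, Set.mem_image, IsPrimitiveVector, eq_inv_smul_iff]
    rfl
  rw [hS]
  refine IsClosed.preimage ?_ <| (Topology.IsClosedEmbedding.piMap fun _ =>
    Int.isClosedEmbedding_coe_real).isClosedMap _ (isClosed_discrete _)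
  exact (continuous_induced_dom.matrix_adjugate).matrix_mulVec continuous_const

lemma isClosed_setOf_forall_smul_eq (s : Set (Fin n → ℝ)) :
    IsClosed {g : SpecialLinearGroup (Fin n) ℝ | ∀ y ∈ s, g • y = y} := by
  simp only [Set.ofPred_forall]
  exact isClosed_biInter fun y _ =>
    isClosed_eq (continuous_induced_dom.matrix_mulVec continuous_const) continuous_const

end Topology

lemma IsPrimitiveVector.exists_smul_eq_self {n : ℕ} {u : Fin n → ℝ}
    {g₁ g₂ : SpecialLinearGroup (Fin n) ℝ} (h₁ : IsPrimitiveVector g₁ u)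
    (h₂ : IsPrimitiveVector g₂ u) : ∃ γ : SpecialLinearGroup (Fin n) ℤ,
      (g₂ * SpecialLinearGroup.map (Int.castRingHom ℝ) γ * g₁⁻¹) • u = u := by
  rcases lt_or_ge 1 n with hn | hn
  · obtain ⟨w₁, hw₁, rfl⟩ := h₁
    obtain ⟨w₂, hw₂, hg₂⟩ := h₂
    obtain ⟨γ, hγ⟩ := hw₁.exists_smul_eq hn hw₂
    exact ⟨γ, by rw [mul_smul, inv_smul_smul, mul_smul, map_intCast_smul, hγ, hg₂]⟩
  · have : Subsingleton (Fin n) := Fin.subsingleton_iff_le_one.mpr hn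
    exact ⟨1, by rw [Subsingleton.elim (g₂ * _ * g₁⁻¹) 1, one_smul]⟩

end UnimodularLattices

open UnimodularLattices in
/-- In `X_n = SL_n(ℝ)/SL_n(ℤ)`, the set `Y₁^ℓ` of unimodular lattices `g·ℤⁿ` meeting
the line `ℓ = ℝ·v₀` in a unimodular (covolume-one, i.e. generated by a unit vector)
lattice of `ℓ` is: (a) closed; (b) invariant under the subgroup
`G(ℓ) = {g ∈ SL_n(ℝ) : g v = v for all v ∈ ℓ}`, which is closed; and (c) a single
orbit of `G(ℓ)`. -/
theorem stmt_6 (n : ℕ) (v₀ : Fin n → ℝ) (hv₀ : v₀ ≠ 0)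
    (ℓ : Submodule ℝ (Fin n → ℝ)) (hℓ : ℓ = Submodule.span ℝ {v₀})
    (SLZ : Subgroup (SpecialLinearGroup (Fin n) ℝ))
    (hSLZ : SLZ = (Matrix.SpecialLinearGroup.map (n := Fin n) (Int.castRingHom ℝ)).range)
    (Y₁ : Set (SpecialLinearGroup (Fin n) ℝ ⧸ SLZ))
    (hY₁ : Y₁ = {x | ∃ g : SpecialLinearGroup (Fin n) ℝ, QuotientGroup.mk g = x ∧
      ∃ w : Fin n → ℤ,
        ((g : Matrix (Fin n) (Fin n) ℝ).mulVec (fun j => (w j : ℝ))) ∈ ℓ ∧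
        ((g : Matrix (Fin n) (Fin n) ℝ).mulVec (fun j => (w j : ℝ))) ⬝ᵥ
          ((g : Matrix (Fin n) (Fin n) ℝ).mulVec (fun j => (w j : ℝ))) = 1 ∧
        ∀ w' : Fin n → ℤ,
          ((g : Matrix (Fin n) (Fin n) ℝ).mulVec (fun j => (w' j : ℝ))) ∈ ℓ →
          ∃ k : ℤ, w' = k • w}) :
    IsClosed Y₁ ∧
    IsClosed {g : SpecialLinearGroup (Fin n) ℝ |
      ∀ y ∈ ℓ, (g : Matrix (Fin n) (Fin n) ℝ).mulVec y = y} ∧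
    (∀ x ∈ Y₁, ∀ g : SpecialLinearGroup (Fin n) ℝ,
      (∀ y ∈ ℓ, (g : Matrix (Fin n) (Fin n) ℝ).mulVec y = y) → g • x ∈ Y₁) ∧
    (∀ x ∈ Y₁, ∀ y ∈ Y₁, ∃ g : SpecialLinearGroup (Fin n) ℝ,
      (∀ z ∈ ℓ, (g : Matrix (Fin n) (Fin n) ℝ).mulVec z = z) ∧ g • x = y) := by
  obtain ⟨u, hu, rfl⟩ : ∃ u, u ⬝ᵥ u = 1 ∧ ℓ = Submodule.span ℝ {u} :=
    hℓ ▸ exists_dotProduct_self_eq_one_span_eq hv₀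
  have hY : Y₁ = QuotientGroup.mk '' {g | IsPrimitiveVector g u} := by
    ext x
    simp only [hY₁, Set.mem_image, isPrimitiveVector_iff hu]
    exact exists_congr fun g => and_comm
  have hpre : QuotientGroup.mk ⁻¹' Y₁ = {g | IsPrimitiveVector g u} := by
    rw [hY]
    refine subset_antisymm ?_ (Set.subset_preimage_image _ _)
    rintro g ⟨g', hg', hgg'⟩
    obtain ⟨γ, hγ⟩ : g'⁻¹ * g ∈ (SpecialLinearGroup.map (Int.castRingHom ℝ)).range :=
      hSLZ ▸ QuotientGroup.eq.mp hgg'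
    simpa [hγ] using hg'.mul_map_intCast γ
  refine ⟨?_, isClosed_setOf_forall_smul_eq _, ?_, ?_⟩
  · rw [← (QuotientGroup.isQuotientMap_mk SLZ).isClosed_preimage, hpre]
    exact isClosed_setOf_isPrimitiveVector u
  · rintro _ hx g hg
    obtain ⟨g', hg', rfl⟩ := hY ▸ hx
    exact hY ▸ ⟨g * g', hg'.mul_left (hg u (Submodule.mem_span_singleton_self u)), rfl⟩
  · rintro _ hx _ hy
    obtain ⟨g₁, h₁, rfl⟩ := hY ▸ hx
    obtain ⟨g₂, h₂, rfl⟩ := hY ▸ hy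
    obtain ⟨γ, hγ⟩ := h₁.exists_smul_eq_self h₂
    refine ⟨g₂ * SpecialLinearGroup.map (Int.castRingHom ℝ) γ * g₁⁻¹, fun z hz => ?_, ?_⟩
    · obtain ⟨a, rfl⟩ := Submodule.mem_span_singleton.mp hz
      exact (smul_comm _ a u).trans (congrArg _ hγ)
    · change QuotientGroup.mk (_ * g₁) = _
      rw [inv_mul_cancel_right]
      exact QuotientGroup.mk_mul_of_mem g₂ (hSLZ ▸ ⟨γ, rfl⟩)
end

section
/- Let X be a locally compact space with locally finite Borel measure μ, and let (μ_T)_{T>0} be a net of Borel probability measures such that μ_T(B) → μ(B) for every set B in a basis 𝒯 of open sets with μ-null boundary (closed under approximation of intersections by finite disjoint unions, and such that every bounded measure-≤ε set can be covered by basis sets of total measure ≤ 2ε). Then μ_T(W) → μ(W) for every bounded measurable W with μ(∂W) = 0. -/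
/-!
Approximate `W` from inside by a finite disjoint union `U` of basis sets with
`μ W ≤ μ U + δ`, and cover the remainder `W \ U` by basis sets `C j` of total mass `≤ 2δ`.
Then `μT U → μ U` by additivity, while `μT W ≤ μT U + ∑ μT (C j)` and the sum tends to
`∑ μ (C j) ≤ 2δ`; so `liminf μT W ≥ μ W - δ` and `limsup μT W ≤ μ W + 2δ`.
-/

open MeasureTheory Filter Set Topology
open scoped ENNReal NNReal

section

variable {X α : Type*} [MeasurableSpace X] {l : Filter α}
  {ν : α → Measure X} {μ : Measure X}

theorem tendsto_measure_of_forall_inner_outer [l.NeBot] {W : Set X}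
    (h : ∀ ε : ℝ≥0, 0 < ε → ∃ U V, U ⊆ W ∧ W ⊆ U ∪ V ∧ μ W ≤ μ U + ε ∧
      Tendsto (fun t => ν t U) l (𝓝 (μ U)) ∧ ∀ᶠ t in l, ν t V ≤ ε) :
    Tendsto (fun t => ν t W) l (𝓝 (μ W)) := by
  refine tendsto_of_le_liminf_of_limsup_le
    (ENNReal.le_of_forall_pos_le_add fun ε hε _ => ?_)
    (ENNReal.le_of_forall_pos_le_add fun ε hε _ => ?_)
  · obtain ⟨U, -, hUW, -, hWU, hU, -⟩ := h ε hε
    calc μ W ≤ μ U + ε := hWU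
      _ = liminf (fun t => ν t U) l + ε := by rw [hU.liminf_eq]
      _ ≤ liminf (fun t => ν t W) l + ε := by
        gcongr
        exact liminf_le_liminf (.of_forall fun t => measure_mono hUW)
  · obtain ⟨U, V, hUW, hWUV, -, hU, hV⟩ := h ε hε
    calc limsup (fun t => ν t W) l ≤ limsup (fun t => ν t U + ε) l := by
          refine limsup_le_limsup (hV.mono fun t htV => ?_)
          calc ν t W ≤ ν t U + ν t V := (measure_mono hWUV).trans (measure_union_le _ _)
            _ ≤ ν t U + ε := by gcongr
      _ = μ U + ε := (hU.add_const _).limsup_eq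
      _ ≤ μ W + ε := by gcongr

theorem tendsto_measure_iUnion_of_pairwise_disjoint {ι : Type*} [Fintype ι] {B : ι → Set X}
    (hdisj : Pairwise (Function.onFun Disjoint B)) (hmeas : ∀ i, MeasurableSet (B i))
    (hB : ∀ i, Tendsto (fun t => ν t (B i)) l (𝓝 (μ (B i)))) :
    Tendsto (fun t => ν t (⋃ i, B i)) l (𝓝 (μ (⋃ i, B i))) := by
  simp only [measure_iUnion hdisj hmeas, tsum_fintype]
  exact tendsto_finsetSum _ fun i _ => hB i

theorem eventually_measure_iUnion_lt {ι : Type*} [Fintype ι] {C : ι → Set X}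
    (hC : ∀ i, Tendsto (fun t => ν t (C i)) l (𝓝 (μ (C i)))) {c : ℝ≥0∞}
    (hc : ∑ i, μ (C i) < c) : ∀ᶠ t in l, ν t (⋃ i, C i) < c :=
  ((tendsto_finsetSum _ fun i _ => hC i).eventually_lt_const hc).mono
    fun _ ht => (measure_iUnion_fintype_le _ _).trans_lt ht

end

theorem stmt_17_general {X : Type*} [TopologicalSpace X]
    [MeasurableSpace X] [BorelSpace X]
    (μ : Measure X) [IsProbabilityMeasure μ]
    (μT : ℝ → Measure X)
    (𝒯 : Set (Set X)) (hbasis : TopologicalSpace.IsTopologicalBasis 𝒯)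
    (hconv : ∀ B ∈ 𝒯, Tendsto (fun T => μT T B) atTop (nhds (μ B)))
    (hinner : ∀ W : Set X, MeasurableSet W → (∃ K, IsCompact K ∧ W ⊆ K) →
      μ (frontier W) = 0 → ∀ ε : ENNReal, 0 < ε →
      ∃ (m : ℕ) (B : Fin m → Set X), (∀ i, B i ∈ 𝒯) ∧
        Pairwise (Function.onFun Disjoint B) ∧ (∀ i, B i ⊆ W) ∧
        μ W ≤ ∑ i, μ (B i) + ε)
    (hcover : ∀ S : Set X, (∃ K, IsCompact K ∧ S ⊆ K) → ∀ ε : ENNReal, μ S ≤ ε →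
      ∃ (m : ℕ) (B : Fin m → Set X), (∀ i, B i ∈ 𝒯) ∧
        S ⊆ (⋃ i, B i) ∧ ∑ i, μ (B i) ≤ 2 * ε) :
    ∀ W : Set X, MeasurableSet W → (∃ K, IsCompact K ∧ W ⊆ K) →
      μ (frontier W) = 0 →
      Tendsto (fun T => μT T W) atTop (nhds (μ W)) := by
  rintro W hW hWK hWfr
  refine tendsto_measure_of_forall_inner_outer fun ε hε => ?_
  obtain ⟨δ, hδ, hδε, h2δ⟩ : ∃ δ : ℝ≥0, 0 < δ ∧ δ ≤ ε ∧ 2 * δ < ε :=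
    ⟨ε / 3, by positivity, by rw [← NNReal.coe_le_coe]; push_cast; linarith [ε.2],
      by rw [← NNReal.coe_lt_coe]; push_cast; linarith [NNReal.coe_pos.2 hε]⟩
  obtain ⟨m, B, hB𝒯, hBdisj, hBW, hμW⟩ := hinner W hW hWK hWfr δ (ENNReal.coe_pos.2 hδ)
  have hBmeas : ∀ i, MeasurableSet (B i) := fun i => (hbasis.isOpen (hB𝒯 i)).measurableSet
  set U := ⋃ i, B i
  have hμU : μ U = ∑ i, μ (B i) := by rw [measure_iUnion hBdisj hBmeas, tsum_fintype]
  rw [← hμU] at hμW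
  have hUW : U ⊆ W := iUnion_subset hBW
  have hμS : μ (W \ U) ≤ δ := by
    rwa [← ENNReal.add_le_add_iff_left (measure_ne_top μ U),
      measure_add_sdiff (MeasurableSet.iUnion hBmeas).nullMeasurableSet, union_eq_right.2 hUW]
  obtain ⟨n, C, hC𝒯, hSC, hμC⟩ :=
    hcover _ (hWK.imp fun K hK => ⟨hK.1, sdiff_subset.trans hK.2⟩) _ hμS
  refine ⟨U, ⋃ j, C j, hUW, sdiff_subset_iff.1 hSC, hμW.trans (by gcongr),
    tendsto_measure_iUnion_of_pairwise_disjoint hBdisj hBmeas fun i => hconv _ (hB𝒯 i),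
    (eventually_measure_iUnion_lt (fun j => hconv _ (hC𝒯 j)) ?_).mono fun _ => le_of_lt⟩
  exact hμC.trans_lt (by exact_mod_cast h2δ)

/-- If a family of probability measures `μ_T` converges to `μ` on every member of a
basis `𝒯` of open sets with `μ`-null boundary, where `𝒯` admits inner approximation
of bounded Jordan-measurable sets by finite disjoint subfamilies (a), and every
bounded set of `μ`-measure `≤ ε` can be covered by finitely many basis sets of total
measure `≤ 2ε` (b), then `μ_T(W) → μ(W)` for every bounded measurable `W` with
`μ(∂W) = 0`. -/
theorem stmt_17 {X : Type*} [TopologicalSpace X] [LocallyCompactSpace X] [T2Space X]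
    [MeasurableSpace X] [BorelSpace X]
    (μ : Measure X) [IsProbabilityMeasure μ]
    (μT : ℝ → Measure X) (hμT : ∀ T, IsProbabilityMeasure (μT T))
    (𝒯 : Set (Set X)) (hbasis : TopologicalSpace.IsTopologicalBasis 𝒯)
    (hnull : ∀ B ∈ 𝒯, μ (frontier B) = 0)
    (hconv : ∀ B ∈ 𝒯, Tendsto (fun T => μT T B) atTop (nhds (μ B)))
    (hinner : ∀ W : Set X, MeasurableSet W → (∃ K, IsCompact K ∧ W ⊆ K) →
      μ (frontier W) = 0 → ∀ ε : ENNReal, 0 < ε →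
      ∃ (m : ℕ) (B : Fin m → Set X), (∀ i, B i ∈ 𝒯) ∧
        Pairwise (Function.onFun Disjoint B) ∧ (∀ i, B i ⊆ W) ∧
        μ W ≤ ∑ i, μ (B i) + ε)
    (hcover : ∀ S : Set X, (∃ K, IsCompact K ∧ S ⊆ K) → ∀ ε : ENNReal, μ S ≤ ε →
      ∃ (m : ℕ) (B : Fin m → Set X), (∀ i, B i ∈ 𝒯) ∧
        S ⊆ (⋃ i, B i) ∧ ∑ i, μ (B i) ≤ 2 * ε) :
    ∀ W : Set X, MeasurableSet W → (∃ K, IsCompact K ∧ W ⊆ K) →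
      μ (frontier W) = 0 →
      Tendsto (fun T => μT T W) atTop (nhds (μ W)) :=
  stmt_17_general μ μT 𝒯 hbasis hconv hinner hcover
end

section
/- Let g = (r s; t u) ∈ GL₂(ℝ) act on binary cubic forms, let v₀ = (a₀,b₀,c₀,d₀) be a binary cubic form with a₀ = d₀ = 0 and b₀, c₀ ≠ 0, and let κ₁, κ₂ ∈ ℝ not both zero. Suppose there exist constants γ₁, γ₂ (not both zero) and η₁,…,η₄ such that γ₁(ru − st)(κ₁r + κ₂s) + γ₂(ru − st)(κ₁t + κ₂u) = ∑ᵢ ηᵢ aᵢ(g·v₀) holds identically in (r,s,t,u), where aᵢ(g·v₀) are the coefficients of the transformed cubic form (degree-3 polynomials in r,s,t,u). Then γ₁κ₁ = γ₂κ₂ = 0. -/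
/-!
Both sides of the identity are cubic forms in `(r, s, t, u)`, so any linear functional reading off
their coefficients may be applied to them. The monomials `r²u` and `rst` occur among the
coefficients `aᵢ(g·v₀)` only in `a₂ = 2b₀·rst + b₀·r²u + …`, hence twice the `r²u`-coefficient
minus the `rst`-coefficient vanishes on the right-hand side, while on the left it is `3γ₁κ₁`.
The substitution `(r, s, t, u) ↦ (u, t, s, r)` preserves the shape of the identity, exchanging
`b₀ ↔ c₀`, `κ₁ ↔ κ₂`, `γ₁ ↔ γ₂` and reversing `η`; it turns `γ₁κ₁ = 0` into `γ₂κ₂ = 0`.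
-/

namespace BinaryCubic

def detForm (κ₁ κ₂ γ₁ γ₂ r s t u : ℝ) : ℝ :=
  γ₁ * (r * u - s * t) * (κ₁ * r + κ₂ * s) + γ₂ * (r * u - s * t) * (κ₁ * t + κ₂ * u)

/-- `∑ᵢ ηᵢ aᵢ(g·v₀)` for `g = (r s; t u)` and `v₀ = (0, b₀, c₀, 0)`. -/
def coeffCombination (b₀ c₀ η₁ η₂ η₃ η₄ r s t u : ℝ) : ℝ :=
  η₁ * (b₀ * r ^ 2 * s + c₀ * r * s ^ 2)
    + η₂ * (2 * b₀ * r * s * t + c₀ * s ^ 2 * t + b₀ * r ^ 2 * u + 2 * c₀ * r * s * u)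
    + η₃ * (2 * b₀ * r * t * u + b₀ * s * t ^ 2 + c₀ * r * u ^ 2 + 2 * c₀ * s * t * u)
    + η₄ * (b₀ * t ^ 2 * u + c₀ * t * u ^ 2)

/-- On a cubic form in `(r, s, t, u)` this is `2[r²u] + 2[u³] - [rst]`: the first two values keep
the terms even in `r` on `s = t = 0`, the last four the terms odd in both `s` and `t` on `u = 0`. -/
noncomputable def r2uSubRst (f : ℝ → ℝ → ℝ → ℝ → ℝ) : ℝ :=
  f 1 0 0 1 + f (-1) 0 0 1 - (f 1 1 1 0 - f 1 1 (-1) 0 - f 1 (-1) 1 0 + f 1 (-1) (-1) 0) / 4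

theorem r2uSubRst_detForm (κ₁ κ₂ γ₁ γ₂ : ℝ) :
    r2uSubRst (detForm κ₁ κ₂ γ₁ γ₂) = 3 * (γ₁ * κ₁) := by
  simp only [r2uSubRst, detForm]
  ring

theorem r2uSubRst_coeffCombination (b₀ c₀ η₁ η₂ η₃ η₄ : ℝ) :
    r2uSubRst (coeffCombination b₀ c₀ η₁ η₂ η₃ η₄) = 0 := by
  simp only [r2uSubRst, coeffCombination]
  ring

theorem mul_eq_zero_of_detForm_eq {κ₁ κ₂ γ₁ γ₂ b₀ c₀ η₁ η₂ η₃ η₄ : ℝ}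
    (h : detForm κ₁ κ₂ γ₁ γ₂ = coeffCombination b₀ c₀ η₁ η₂ η₃ η₄) : γ₁ * κ₁ = 0 := by
  have h3 := congrArg r2uSubRst h
  rw [r2uSubRst_detForm, r2uSubRst_coeffCombination] at h3
  linarith

theorem detForm_reverse (κ₁ κ₂ γ₁ γ₂ r s t u : ℝ) :
    detForm κ₂ κ₁ γ₂ γ₁ r s t u = detForm κ₁ κ₂ γ₁ γ₂ u t s r := by
  simp only [detForm]
  ring

theorem coeffCombination_reverse (b₀ c₀ η₁ η₂ η₃ η₄ r s t u : ℝ) :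
    coeffCombination c₀ b₀ η₄ η₃ η₂ η₁ r s t u = coeffCombination b₀ c₀ η₁ η₂ η₃ η₄ u t s r := by
  simp only [coeffCombination]
  ring

theorem detForm_eq_reverse {κ₁ κ₂ γ₁ γ₂ b₀ c₀ η₁ η₂ η₃ η₄ : ℝ}
    (h : detForm κ₁ κ₂ γ₁ γ₂ = coeffCombination b₀ c₀ η₁ η₂ η₃ η₄) :
    detForm κ₂ κ₁ γ₂ γ₁ = coeffCombination c₀ b₀ η₄ η₃ η₂ η₁ := by
  funext r s t u
  rw [detForm_reverse, coeffCombination_reverse, h]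

end BinaryCubic

open BinaryCubic

theorem stmt_19_general (b₀ c₀ κ₁ κ₂ γ₁ γ₂ η₁ η₂ η₃ η₄ : ℝ)
    (hid : ∀ r s t u : ℝ,
      γ₁ * (r * u - s * t) * (κ₁ * r + κ₂ * s)
        + γ₂ * (r * u - s * t) * (κ₁ * t + κ₂ * u) =
      η₁ * (b₀ * r ^ 2 * s + c₀ * r * s ^ 2)
        + η₂ * (2 * b₀ * r * s * t + c₀ * s ^ 2 * t + b₀ * r ^ 2 * u
            + 2 * c₀ * r * s * u)
        + η₃ * (2 * b₀ * r * t * u + b₀ * s * t ^ 2 + c₀ * r * u ^ 2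
            + 2 * c₀ * s * t * u)
        + η₄ * (b₀ * t ^ 2 * u + c₀ * t * u ^ 2)) :
    γ₁ * κ₁ = 0 ∧ γ₂ * κ₂ = 0 := by
  have h : detForm κ₁ κ₂ γ₁ γ₂ = coeffCombination b₀ c₀ η₁ η₂ η₃ η₄ := by
    funext r s t u
    exact hid r s t u
  exact ⟨mul_eq_zero_of_detForm_eq h, mul_eq_zero_of_detForm_eq (detForm_eq_reverse h)⟩

/-- If the polynomial identity
`γ₁(ru−st)(κ₁r+κ₂s) + γ₂(ru−st)(κ₁t+κ₂u) = ∑ᵢ ηᵢ aᵢ(g·v₀)` holds identically in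
`(r,s,t,u)`, where `aᵢ(g·v₀)` are the coefficients of the binary cubic form
`(0,b₀,c₀,0)` transformed by `g = (r s; t u)`, then `γ₁κ₁ = 0` and `γ₂κ₂ = 0`. -/
theorem stmt_19 (b₀ c₀ κ₁ κ₂ γ₁ γ₂ η₁ η₂ η₃ η₄ : ℝ)
    (hb₀ : b₀ ≠ 0) (hc₀ : c₀ ≠ 0)
    (hκ : κ₁ ≠ 0 ∨ κ₂ ≠ 0) (hγ : γ₁ ≠ 0 ∨ γ₂ ≠ 0)
    (hid : ∀ r s t u : ℝ,
      γ₁ * (r * u - s * t) * (κ₁ * r + κ₂ * s)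
        + γ₂ * (r * u - s * t) * (κ₁ * t + κ₂ * u) =
      η₁ * (b₀ * r ^ 2 * s + c₀ * r * s ^ 2)
        + η₂ * (2 * b₀ * r * s * t + c₀ * s ^ 2 * t + b₀ * r ^ 2 * u
            + 2 * c₀ * r * s * u)
        + η₃ * (2 * b₀ * r * t * u + b₀ * s * t ^ 2 + c₀ * r * u ^ 2
            + 2 * c₀ * s * t * u)
        + η₄ * (b₀ * t ^ 2 * u + c₀ * t * u ^ 2)) :
    γ₁ * κ₁ = 0 ∧ γ₂ * κ₂ = 0 :=
  stmt_19_general b₀ c₀ κ₁ κ₂ γ₁ γ₂ η₁ η₂ η₃ η₄ hid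
end
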